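/- arXiv:2203.02279 — 3 statements merged into one kernel-verified Lean document; each statement's English description precedes it below -/
import Mathlib

section
/- Let K be an algebraically closed field with a nonarchimedean multiplicative norm |·| (e.g. K = ℂ_p). Let P ∈ K[z] be a polynomial of degree n ≥ 2 such that |n| = 1 (in the case K = ℂ_p this means p does not divide n). If all roots of P lie in the disk D(a,r), then all roots of the derivative P′ also lie in D(a,r). In other words, for such n the exact analogue of the Gauss–Lucas theorem holds: every disk containing the zeros of P contains all zeros of P′. -/
/-!
Suppose `ω` is a root of `P'` with `‖ω - a‖ > r`. Then `ω` is not a root of `P`, so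
`0 = P'(ω) / P(ω) = ∑ 1 / (ω - z)` over the roots `z` of `P`. Each root is closer to `a` than `ω`
is, so in the ultrametric norm every term differs from `1 / (ω - a)` by something of norm strictly
less than `‖ω - a‖⁻¹`. The sum is therefore `n / (ω - a)` plus a strictly smaller error, and since
`‖n‖ = 1` it has norm exactly `‖ω - a‖⁻¹ ≠ 0`, a contradiction.
-/

open Polynomial

namespace IsUltrametricDist

variable {K : Type*} [NormedField K] [IsUltrametricDist K]

lemma norm_one_div_sub_sub_one_div_sub_lt {a z ω : K} (h : ‖z - a‖ < ‖ω - a‖) :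
    ‖1 / (ω - z) - 1 / (ω - a)‖ < ‖ω - a‖⁻¹ := by
  have hpos : 0 < ‖ω - a‖ := (norm_nonneg _).trans_lt h
  have hωz : ‖ω - z‖ = ‖ω - a‖ := by
    have hne : ‖ω - a‖ ≠ ‖a - z‖ := by rw [norm_sub_rev a z]; exact h.ne'
    rw [← sub_add_sub_cancel ω a z, norm_add_eq_max_of_norm_ne_norm hne, max_eq_left]
    rw [norm_sub_rev a z]; exact h.le
  have hωa : ω - a ≠ 0 := norm_pos_iff.mp hpos
  have hωz' : ω - z ≠ 0 := norm_pos_iff.mp (hωz ▸ hpos)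
  have hdiff : 1 / (ω - z) - 1 / (ω - a) = (z - a) / ((ω - z) * (ω - a)) := by
    field_simp
    ring
  calc ‖1 / (ω - z) - 1 / (ω - a)‖ = ‖z - a‖ / (‖ω - a‖ * ‖ω - a‖) := by
        rw [hdiff, norm_div, norm_mul, hωz]
    _ < ‖ω - a‖ / (‖ω - a‖ * ‖ω - a‖) := by gcongr
    _ = ‖ω - a‖⁻¹ := by field_simp

lemma norm_sum_one_div_sub_eq {a ω : K} {m : Multiset K} (hm : ∀ z ∈ m, ‖z - a‖ < ‖ω - a‖)
    (hcard : ‖(Multiset.card m : K)‖ = 1) :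
    ‖(m.map fun z ↦ 1 / (ω - z)).sum‖ = ‖ω - a‖⁻¹ := by
  have hm0 : m ≠ 0 := by rintro rfl; simp at hcard
  obtain ⟨z, hzm, hz⟩ := exists_norm_multiset_sum_le m
    (f := fun z ↦ 1 / (ω - z) - 1 / (ω - a))
  have herror := hz.trans_lt (norm_one_div_sub_sub_one_div_sub_lt (hm z (hzm hm0)))
  have hmain : ‖(Multiset.card m : K) * (1 / (ω - a))‖ = ‖ω - a‖⁻¹ := by
    rw [norm_mul, hcard, one_mul, norm_div, norm_one, one_div]
  have hsplit : (m.map fun z ↦ 1 / (ω - z)).sum = (Multiset.card m : K) * (1 / (ω - a)) +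
      (m.map fun z ↦ 1 / (ω - z) - 1 / (ω - a)).sum := by
    rw [← nsmul_eq_mul, ← Multiset.sum_replicate, ← Multiset.map_const', ← Multiset.sum_map_add]
    simp only [add_sub_cancel]
  rw [hsplit, norm_add_eq_max_of_norm_ne_norm (hmain ▸ herror.ne'), hmain, max_eq_left]
  exact hmain ▸ herror.le

end IsUltrametricDist

theorem Polynomial.Splits.norm_sub_le_of_mem_roots_derivative {K : Type*} [NormedField K]
    [IsUltrametricDist K] {P : K[X]} (hP : P.Splits) (hdeg : ‖(P.natDegree : K)‖ = 1)
    {a : K} {r : ℝ} (hroots : ∀ z ∈ P.roots, ‖z - a‖ ≤ r) {ω : K} (hω : ω ∈ P.derivative.roots) :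
    ‖ω - a‖ ≤ r := by
  by_contra! hfar
  obtain ⟨hP'0, hP'ω⟩ := mem_roots'.mp hω
  have hP0 : P ≠ 0 := by rintro rfl; simp at hP'0
  have hPω : P.eval ω ≠ 0 := fun h ↦ hfar.not_ge (hroots ω ((mem_roots hP0).mpr h))
  have hnear : ∀ z ∈ P.roots, ‖z - a‖ < ‖ω - a‖ := fun z hz ↦ (hroots z hz).trans_lt hfar
  have hnorm := IsUltrametricDist.norm_sum_one_div_sub_eq hnear
    (by rwa [splits_iff_card_roots.mp hP])
  have hsum : (P.roots.map fun z ↦ 1 / (ω - z)).sum = 0 := by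
    have := hP.eval_derivative_eq_eval_mul_sum hPω
    rw [hP'ω.eq_zero, eq_comm, mul_eq_zero] at this
    exact this.resolve_left hPω
  obtain ⟨z, hz⟩ := Multiset.exists_mem_of_ne_zero (s := P.roots) (by
    rintro h; simp [← splits_iff_card_roots.mp hP, h] at hdeg)
  have hωa : 0 < ‖ω - a‖ := (norm_nonneg _).trans_lt (hnear z hz)
  rw [hsum, norm_zero] at hnorm
  exact (inv_pos.mpr hωa).ne hnorm

theorem stmt3_general {K : Type*} [NormedField K] [IsAlgClosed K]
    (hna : ∀ x y : K, ‖x + y‖ ≤ max ‖x‖ ‖y‖)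
    (P : K[X]) (n : ℕ) (hdeg : P.natDegree = n)
    (hnorm : ‖(n : K)‖ = 1)
    (a : K) (r : ℝ)
    (hroots : ∀ z ∈ P.roots, ‖z - a‖ ≤ r) :
    ∀ ω ∈ P.derivative.roots, ‖ω - a‖ ≤ r := by
  have : IsUltrametricDist K :=
    IsUltrametricDist.isUltrametricDist_of_forall_norm_add_le_max_norm hna
  exact fun ω hω ↦
    (IsAlgClosed.splits P).norm_sub_le_of_mem_roots_derivative (hdeg ▸ hnorm) hroots hω

/-- **Corollary 3 (exact Gauss–Lucas analogue).** If `P` has degree `n ≥ 2` with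
`|n| = 1` over an algebraically closed nonarchimedean normed field and all roots of
`P` lie in the disk `D(a, r)`, then all roots of `P'` lie in `D(a, r)` as well. -/
theorem stmt3 {K : Type*} [NormedField K] [IsAlgClosed K]
    (hna : ∀ x y : K, ‖x + y‖ ≤ max ‖x‖ ‖y‖)
    (P : K[X]) (n : ℕ) (hn : 2 ≤ n) (hdeg : P.natDegree = n)
    (hnorm : ‖(n : K)‖ = 1)
    (a : K) (r : ℝ) (hr : 0 ≤ r)
    (hroots : ∀ z ∈ P.roots, ‖z - a‖ ≤ r) :
    ∀ ω ∈ P.derivative.roots, ‖ω - a‖ ≤ r :=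
  stmt3_general hna P n hdeg hnorm a r hroots
end

section
/- Let K be an algebraically closed field with a nonarchimedean multiplicative norm |·| (e.g. K = ℂ_p). Let P ∈ K[z] be a monic polynomial of degree n ≥ 2 whose roots λ₁,…,λₙ (with multiplicity) satisfy |λ_i| ≤ r for all i, and let ω₁,…,ω_{n−1} be the roots of P′ (with multiplicity), ordered so that |ω₁| ≤ |ω₂| ≤ ⋯ ≤ |ω_{n−1}|. Then for every k = 1, 2, …, n−1, |ω_k| ≤ r · max{ |j/n|^{1/(n−j)} : j = 1, 2, …, k }. -/
/-!
Let `h = ‖ω k‖` and let `t` be the number of critical points of norm `< h`; monotonicity gives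
`t ≤ k`. Over an ultrametric field the `t`-th coefficient of `P' = n ∏ (X - ω_i)` is dominated
by a single term: its norm is exactly `‖n‖ ∏_{‖ω_i‖ ≥ h} ‖ω_i‖ ≥ ‖n‖ h ^ (n - 1 - t)`. On the
other hand it equals `(t + 1) a_{t+1}`, and the coefficients of `P = ∏ (X - λ_i)` satisfy
`‖a_j‖ ≤ r ^ (n - j)`. Comparing gives `h ^ (n - 1 - t) ≤ ‖(t + 1) / n‖ r ^ (n - 1 - t)`.
-/

open Polynomial

theorem Multiset.card_filter_ofFn_lt_le {α β : Type*} [LinearOrder β] {n : ℕ} (ω : Fin n → α)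
    (g : α → β) (hω : Monotone fun i => g (ω i)) (k : Fin n) :
    card ((List.ofFn ω : Multiset α).filter fun a => g a < g (ω k)) ≤ k := by
  rw [← Fin.univ_val_map, Multiset.filter_map, Multiset.card_map, ← Fin.card_Iio k]
  refine Finset.card_le_card (s := Finset.univ.filter _) fun i hi => Finset.mem_Iio.2 ?_
  by_contra! hki
  exact (Finset.mem_filter.1 hi).2.not_ge (hω hki)

theorem Real.le_mul_rpow_one_div_of_pow_le {h r c : ℝ} {m : ℕ} (hr : 0 ≤ r) (hc : 0 ≤ c)
    (hm : m ≠ 0) (H : h ^ m ≤ c * r ^ m) : h ≤ r * c ^ (1 / (m : ℝ)) := by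
  refine le_of_pow_le_pow_left₀ hm (by positivity) ?_
  rwa [mul_pow, one_div, Real.rpow_inv_natCast_pow hc hm, mul_comm]

namespace Polynomial

theorem Monic.derivative_eq_C_mul_prod_roots {R : Type*} [CommRing R] [IsDomain R] {P : R[X]}
    (hP : P.Monic) (hroots : Multiset.card (derivative P).roots = P.natDegree - 1) :
    derivative P = C (P.natDegree : R) * ((derivative P).roots.map fun a => X - C a).prod := by
  have hdeg : (derivative P).natDegree = P.natDegree - 1 :=
    (natDegree_derivative_le P).antisymm (hroots ▸ card_roots' _)
  have hlc : (derivative P).leadingCoeff = P.natDegree := by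
    rcases Nat.eq_zero_or_pos P.natDegree with h0 | hpos
    · simp [derivative_of_natDegree_zero h0, h0]
    · rw [← Polynomial.coeff_natDegree, hdeg, coeff_derivative, Nat.sub_add_cancel hpos,
        hP.coeff_natDegree, one_mul, Nat.cast_sub hpos]
      ring
  rw [← hlc, C_leadingCoeff_mul_prod_multiset_X_sub_C (hroots.trans hdeg.symm)]

section Ultrametric

variable {K : Type*} [NormedField K]

theorem norm_coeff_zero_multiset_prod_X_sub_C (s : Multiset K) :
    ‖(s.map fun a => X - C a).prod.coeff 0‖ = (s.map (‖·‖)).prod := by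
  rw [coeff_zero_eq_eval_zero, eval_multiset_prod, Multiset.map_map]
  simpa [Multiset.prod_map_neg] using map_multiset_prod (normHom : K →*₀ ℝ) s

variable [IsUltrametricDist K]

theorem norm_coeff_multiset_prod_X_sub_C_le {s : Multiset K} {B : ℝ} (hs : ∀ a ∈ s, ‖a‖ ≤ B)
    (j : ℕ) : ‖(s.map fun a => X - C a).prod.coeff j‖ ≤ B ^ (Multiset.card s - j) := by
  induction s using Multiset.induction generalizing j with
  | empty => cases j <;> simp [coeff_one]
  | cons a s ih =>
    have ha : ‖a‖ ≤ B := hs a (Multiset.mem_cons_self a s)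
    have hB : 0 ≤ B := (norm_nonneg a).trans ha
    replace ih := ih fun x hx => hs x (Multiset.mem_cons_of_mem hx)
    rw [Multiset.map_cons, Multiset.prod_cons, Multiset.card_cons, sub_mul]
    cases j with
    | zero =>
      simpa [coeff_C_mul, pow_succ'] using mul_le_mul ha (ih 0) (norm_nonneg _) hB
    | succ j =>
      rw [coeff_sub, coeff_X_mul, coeff_C_mul, sub_eq_add_neg]
      refine (IsUltrametricDist.norm_add_le_max _ _).trans (max_le ?_ ?_)
      · simpa using ih j
      · rw [norm_neg]
        rcases le_or_gt (j + 1) (Multiset.card s) with hj | hj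
        · calc ‖a * _‖ ≤ B * B ^ (Multiset.card s - (j + 1)) := by
                rw [norm_mul]; exact mul_le_mul ha (ih _) (norm_nonneg _) hB
            _ = B ^ (Multiset.card s + 1 - (j + 1)) := by rw [← pow_succ']; congr 1; omega
        · rw [coeff_eq_zero_of_natDegree_lt (by rwa [natDegree_multiset_prod_X_sub_C_eq_card])]
          simp only [mul_zero, norm_zero]
          positivity

theorem norm_coeff_multiset_prod_X_sub_C_mul_pow_le {u : Multiset K} {h : ℝ} (hh : 0 ≤ h)
    (hu : ∀ b ∈ u, h ≤ ‖b‖) (j : ℕ) :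
    ‖(u.map fun b => X - C b).prod.coeff j‖ * h ^ j ≤ (u.map (‖·‖)).prod := by
  induction u using Multiset.induction generalizing j with
  | empty => cases j <;> simp [coeff_one]
  | cons a u ih =>
    have ha : h ≤ ‖a‖ := hu a (Multiset.mem_cons_self a u)
    replace ih := ih fun x hx => hu x (Multiset.mem_cons_of_mem hx)
    have hprod : 0 ≤ (u.map (‖·‖)).prod := Multiset.prod_map_nonneg fun _ _ => norm_nonneg _
    set Q := (u.map fun b => X - C b).prod
    rw [Multiset.map_cons, Multiset.prod_cons, Multiset.map_cons, Multiset.prod_cons, sub_mul]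
    cases j with
    | zero =>
      simpa [coeff_C_mul] using mul_le_mul_of_nonneg_left (ih 0) (norm_nonneg a)
    | succ j =>
      rw [coeff_sub, coeff_X_mul, coeff_C_mul]
      calc ‖Q.coeff j - a * Q.coeff (j + 1)‖ * h ^ (j + 1)
          ≤ max ‖Q.coeff j‖ ‖a * Q.coeff (j + 1)‖ * h ^ (j + 1) := by
            gcongr
            rw [sub_eq_add_neg, ← norm_neg (a * _)]
            exact IsUltrametricDist.norm_add_le_max _ _
        _ = max (‖Q.coeff j‖ * h ^ j * h) (‖a‖ * (‖Q.coeff (j + 1)‖ * h ^ (j + 1))) := by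
            rw [max_mul_of_nonneg _ _ (by positivity), norm_mul, pow_succ, mul_assoc, mul_assoc]
        _ ≤ ‖a‖ * (u.map (‖·‖)).prod :=
            max_le (by rw [mul_comm ‖a‖]; exact mul_le_mul (ih j) ha hh hprod)
              (mul_le_mul_of_nonneg_left (ih _) (norm_nonneg a))

theorem norm_coeff_card_multiset_prod_X_sub_C_add {s u : Multiset K} {h : ℝ}
    (hs : ∀ a ∈ s, ‖a‖ < h) (hu : ∀ b ∈ u, h ≤ ‖b‖) :
    ‖((s + u).map fun a => X - C a).prod.coeff (Multiset.card s)‖ = (u.map (‖·‖)).prod := by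
  rcases eq_or_ne s 0 with rfl | hs0
  · simpa using norm_coeff_zero_multiset_prod_X_sub_C u
  obtain ⟨a, ha, hmax⟩ := Multiset.exists_max_image (‖·‖) hs0
  have hah : ‖a‖ < h := hs a ha
  have hh : 0 < h := (norm_nonneg a).trans_lt hah
  have hprod : 0 < (u.map (‖·‖)).prod :=
    Multiset.prod_pos fun x hx => by
      obtain ⟨b, hb, rfl⟩ := Multiset.mem_map.1 hx
      exact hh.trans_le (hu b hb)
  set S := (s.map fun a => X - C a).prod
  set Q := (u.map fun b => X - C b).prod
  have hS : S.coeff (Multiset.card s) = 1 := by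
    simpa [S, natDegree_multiset_prod_X_sub_C_eq_card] using
      (monic_multiset_prod_of_monic s _ fun a _ => monic_X_sub_C a).coeff_natDegree
  -- Every term `S_i * Q_j` other than `S_(card s) * Q_0` has `j ≥ 1`, hence norm at most
  -- `(‖a‖ / h) ^ j * ∏ ‖u‖ < ∏ ‖u‖`.
  have hsmall : ‖∑ x ∈ (Finset.HasAntidiagonal.antidiagonal (Multiset.card s)).erase
      (Multiset.card s, 0), S.coeff x.1 * Q.coeff x.2‖ < (u.map (‖·‖)).prod := by
    have hmem (x : K) : x ∈ IsUltrametricDist.ball_openAddSubgroup K hprod ↔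
        ‖x‖ < (u.map (‖·‖)).prod := mem_ball_zero_iff
    refine (hmem _).1 (sum_mem fun x hx => (hmem _).2 ?_)
    obtain ⟨hne, hx⟩ := Finset.mem_erase.1 hx
    rw [Finset.HasAntidiagonal.mem_antidiagonal] at hx
    have hj : x.2 ≠ 0 := fun h0 => hne (Prod.ext (by omega) h0)
    have hSx : ‖S.coeff x.1‖ ≤ ‖a‖ ^ x.2 := by
      simpa [show Multiset.card s - x.1 = x.2 by omega] using
        norm_coeff_multiset_prod_X_sub_C_le hmax x.1
    have hQx := norm_coeff_multiset_prod_X_sub_C_mul_pow_le hh.le hu x.2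
    have hpow : ‖a‖ ^ x.2 < h ^ x.2 := pow_lt_pow_left₀ hah (norm_nonneg a) hj
    rw [norm_mul]
    nlinarith [mul_le_mul hSx hQx (by positivity) (by positivity), pow_pos hh x.2]
  have hdom := hsmall.trans_eq (norm_coeff_zero_multiset_prod_X_sub_C u).symm
  rw [Multiset.map_add, Multiset.prod_add, coeff_mul,
    ← Finset.add_sum_erase _ _ (a := (Multiset.card s, 0))
      (Finset.HasAntidiagonal.mem_antidiagonal.2 (add_zero _)), hS, one_mul,
    IsUltrametricDist.norm_add_eq_max_of_norm_ne_norm hdom.ne', max_eq_left hdom.le,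
    norm_coeff_zero_multiset_prod_X_sub_C]

variable {P : K[X]} {r h : ℝ} {t : ℕ}

theorem Monic.norm_natCast_natDegree_mul_pow_le (hP : P.Monic)
    (hsplit : Multiset.card P.roots = P.natDegree) (hroots : ∀ z ∈ P.roots, ‖z‖ ≤ r)
    (hsplit' : Multiset.card (derivative P).roots = P.natDegree - 1) (hh : 0 ≤ h)
    (ht : Multiset.card ((derivative P).roots.filter (‖·‖ < h)) = t) :
    ‖(P.natDegree : K)‖ * h ^ (P.natDegree - 1 - t) ≤
      ‖((t + 1 : ℕ) : K)‖ * r ^ (P.natDegree - 1 - t) := by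
  set s := (derivative P).roots.filter (‖·‖ < h)
  set u := (derivative P).roots.filter fun a => ¬‖a‖ < h
  have hsu : s + u = (derivative P).roots := Multiset.filter_add_not _ _
  have hu : Multiset.card u = P.natDegree - 1 - t := by
    rw [← hsplit', ← hsu, Multiset.card_add, ht]; omega
  have hlower : ‖(derivative P).coeff t‖ = ‖(P.natDegree : K)‖ * (u.map (‖·‖)).prod := by
    rw [hP.derivative_eq_C_mul_prod_roots hsplit', coeff_C_mul, norm_mul, ← hsu, ← ht,
      norm_coeff_card_multiset_prod_X_sub_C_add (fun a ha => (Multiset.mem_filter.1 ha).2)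
        fun b hb => not_lt.1 (Multiset.mem_filter.1 hb).2]
  have hupper : ‖(derivative P).coeff t‖ ≤ ‖((t + 1 : ℕ) : K)‖ * r ^ (P.natDegree - 1 - t) := by
    have hP_coeff := norm_coeff_multiset_prod_X_sub_C_le hroots (t + 1)
    rw [prod_multiset_X_sub_C_of_monic_of_roots_card_eq hP hsplit, hsplit] at hP_coeff
    rw [coeff_derivative, norm_mul, mul_comm, Nat.cast_succ, Nat.sub_sub, add_comm 1 t]
    exact mul_le_mul_of_nonneg_left hP_coeff (norm_nonneg _)
  have hpow : h ^ Multiset.card u ≤ (u.map (‖·‖)).prod := by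
    simpa using Multiset.prod_map_le_prod_map₀ (s := u) (fun _ => h) (‖·‖) (fun _ _ => hh)
      fun b hb => not_lt.1 (Multiset.mem_filter.1 hb).2
  calc ‖(P.natDegree : K)‖ * h ^ (P.natDegree - 1 - t)
      ≤ ‖(P.natDegree : K)‖ * (u.map (‖·‖)).prod := by
        rw [← hu]; exact mul_le_mul_of_nonneg_left hpow (norm_nonneg _)
    _ = ‖(derivative P).coeff t‖ := hlower.symm
    _ ≤ _ := hupper

theorem Monic.le_mul_norm_div_rpow (hP : P.Monic)
    (hsplit : Multiset.card P.roots = P.natDegree) (hroots : ∀ z ∈ P.roots, ‖z‖ ≤ r) (hr : 0 ≤ r)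
    (hsplit' : Multiset.card (derivative P).roots = P.natDegree - 1) (hh : 0 ≤ h)
    (ht : Multiset.card ((derivative P).roots.filter (‖·‖ < h)) = t)
    (htd : t < P.natDegree - 1) :
    h ≤ r * ‖((t + 1 : ℕ) : K) / P.natDegree‖ ^ (1 / ((P.natDegree : ℝ) - (t + 1 : ℕ))) := by
  have hn0 : (P.natDegree : K) ≠ 0 := by
    intro h0
    have := hP.derivative_eq_C_mul_prod_roots hsplit'
    rw [h0, C_0, zero_mul] at this
    rw [this, roots_zero, Multiset.card_zero] at hsplit'
    omega
  have hm : ((P.natDegree - 1 - t : ℕ) : ℝ) = (P.natDegree : ℝ) - (t + 1 : ℕ) := by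
    rw [Nat.sub_sub, Nat.cast_sub (by omega), add_comm 1 t]
  rw [← hm]
  refine Real.le_mul_rpow_one_div_of_pow_le hr (norm_nonneg _) (by omega) ?_
  rw [norm_div, div_mul_eq_mul_div, le_div_iff₀ (norm_pos_iff.2 hn0), mul_comm]
  exact hP.norm_natCast_natDegree_mul_pow_le hsplit hroots hsplit' hh ht

end Ultrametric

end Polynomial

theorem stmt4_general {K : Type*} [NormedField K] [IsAlgClosed K]
    (hna : ∀ x y : K, ‖x + y‖ ≤ max ‖x‖ ‖y‖)
    (P : K[X]) (n : ℕ) (hmonic : P.Monic) (hdeg : P.natDegree = n)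
    (r : ℝ) (hroots : ∀ z ∈ P.roots, ‖z‖ ≤ r)
    (ω : Fin (n - 1) → K)
    (hω : P.derivative.roots = (List.ofFn ω : Multiset K))
    (hmono : Monotone fun i => ‖ω i‖) :
    ∀ k : Fin (n - 1),
      ‖ω k‖ ≤ r * (Finset.Icc 1 (k.val + 1)).sup'
        (Finset.nonempty_Icc.mpr (Nat.succ_le_succ (Nat.zero_le _)))
        (fun j => ‖((j : K) / (n : K))‖ ^ (1 / ((n : ℝ) - (j : ℕ)))) := by
  intro k
  have := IsUltrametricDist.isUltrametricDist_of_forall_norm_add_le_max_norm hna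
  have hsplit : Multiset.card P.roots = P.natDegree := IsAlgClosed.card_roots_eq_natDegree
  have hsplit' : Multiset.card (derivative P).roots = P.natDegree - 1 := by simp [hω, hdeg]
  have hr : 0 ≤ r := by
    obtain ⟨z, hz⟩ :=
      Multiset.card_pos_iff_exists_mem.1 (show 0 < Multiset.card P.roots by have := k.2; omega)
    exact (norm_nonneg z).trans (hroots z hz)
  have htk := hω ▸ Multiset.card_filter_ofFn_lt_le ω (‖·‖) hmono k
  calc ‖ω k‖ ≤ _ := hdeg ▸ hmonic.le_mul_norm_div_rpow hsplit hroots hr hsplit'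
        (norm_nonneg _) rfl (by omega)
    _ ≤ _ := mul_le_mul_of_nonneg_left (Finset.le_sup'
        (fun j : ℕ => ‖((j : K) / (n : K))‖ ^ (1 / ((n : ℝ) - (j : ℕ))))
        (Finset.mem_Icc.2 ⟨by omega, by omega⟩)) hr

/-- **Main theorem, norm-ordered form.** Let `P` be a monic polynomial of degree
`n ≥ 2` over an algebraically closed nonarchimedean normed field, all of whose roots
satisfy `‖λ‖ ≤ r`, and let `ω 0, …, ω (n-2)` enumerate the roots of `P'` (with
multiplicity) in order of non-decreasing norm.  Then the `k`-th root (1-indexed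
`k = k.val + 1`) satisfies `‖ω k‖ ≤ r * max { |j/n|^(1/(n-j)) : j = 1, …, k+1 }`. -/
theorem stmt4 {K : Type*} [NormedField K] [IsAlgClosed K]
    (hna : ∀ x y : K, ‖x + y‖ ≤ max ‖x‖ ‖y‖)
    (P : K[X]) (n : ℕ) (hn : 2 ≤ n) (hmonic : P.Monic) (hdeg : P.natDegree = n)
    (r : ℝ) (hroots : ∀ z ∈ P.roots, ‖z‖ ≤ r)
    (ω : Fin (n - 1) → K)
    (hω : P.derivative.roots = (List.ofFn ω : Multiset K))
    (hmono : Monotone fun i => ‖ω i‖) :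
    ∀ k : Fin (n - 1),
      ‖ω k‖ ≤ r * (Finset.Icc 1 (k.val + 1)).sup'
        (Finset.nonempty_Icc.mpr (Nat.succ_le_succ (Nat.zero_le _)))
        (fun j => ‖((j : K) / (n : K))‖ ^ (1 / ((n : ℝ) - (j : ℕ)))) :=
  stmt4_general hna P n hmonic hdeg r hroots ω hω hmono
end

section
/- In the field ℚ₃ of 3-adic numbers with its standard norm, consider the polynomial P(z) = z²(z − 1) = z³ − z². All roots of P (namely 0 with multiplicity 2 and 1) lie in the disk D(0,1) = {z : |z| ≤ 1}, while the derivative P′(z) = 3z(z − 2/3) has roots 0 and 2/3 with |2/3| = 3; hence the root 2/3 of P′ does not lie in D(0,1), and every disk D(0,s) containing all roots of P′ must have s ≥ 3 = |3|^{−1}·1. This shows the bound r·|n|^{−1} in the Gauss–Lucas analogue cannot be improved. -/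
/-! Since `X ^ 3 - X ^ 2 = X ^ 2 * (X - 1)` and, in characteristic `≠ 3`, its derivative is
`3 * X * (X - 2 / 3)`, everything reduces to `‖2 / 3‖ = ‖2‖ / ‖3‖ = 1 / 3⁻¹ = 3` in `ℚ_[3]`. -/

open Polynomial

theorem Padic.norm_natCast_div_p {p : ℕ} [Fact p.Prime] {n : ℕ} (hn : p.Coprime n) :
    ‖(n / p : ℚ_[p])‖ = p := by
  rw [norm_div, Padic.norm_natCast_eq_one_iff.2 hn, Padic.norm_p, one_div, inv_inv]

theorem norm_two_div_three : ‖(2 / 3 : ℚ_[3])‖ = 3 := by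
  have : Fact (Nat.Prime 3) := ⟨Nat.prime_three⟩
  exact_mod_cast Padic.norm_natCast_div_p (p := 3) (n := 2) (by norm_num)

theorem X_pow_three_sub_X_pow_two_eq {R : Type*} [CommRing R] :
    (X ^ 3 - X ^ 2 : R[X]) = X ^ 2 * (X - C 1) := by
  rw [C_1]; ring

theorem roots_X_pow_three_sub_X_pow_two {R : Type*} [CommRing R] [IsDomain R] :
    (X ^ 3 - X ^ 2 : R[X]).roots = {0, 0, 1} := by
  rw [X_pow_three_sub_X_pow_two_eq,
    roots_mul (mul_ne_zero (pow_ne_zero _ X_ne_zero) (X_sub_C_ne_zero 1)), roots_X_pow,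
    roots_X_sub_C]
  rfl

section
variable {K : Type*} [Field K]

theorem derivative_X_pow_three_sub_X_pow_two_eq (h3 : (3 : K) ≠ 0) :
    derivative (X ^ 3 - X ^ 2 : K[X]) = C 3 * (X * (X - C (2 / 3))) := by
  calc derivative (X ^ 3 - X ^ 2 : K[X]) = C 3 * X ^ 2 - C (3 * (2 / 3)) * X := by
        rw [mul_div_cancel₀ _ h3, derivative_sub, derivative_X_pow, derivative_X_pow]
        norm_num
    _ = C 3 * (X * (X - C (2 / 3))) := by rw [C_mul]; ring

theorem roots_derivative_X_pow_three_sub_X_pow_two (h3 : (3 : K) ≠ 0) :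
    (derivative (X ^ 3 - X ^ 2 : K[X])).roots = {0, 2 / 3} := by
  rw [derivative_X_pow_three_sub_X_pow_two_eq h3, roots_C_mul _ h3,
    roots_mul (mul_ne_zero X_ne_zero (X_sub_C_ne_zero _)), roots_X, roots_X_sub_C]
  rfl
end

/-- **Sharpness example over `ℚ₃`.** For `P(z) = z³ - z² = z²(z-1)` over the
3-adic numbers: the roots of `P` are `0, 0, 1`, all in the disk `D(0,1)`; the
derivative `P'(z) = 3z(z - 2/3)` has roots `0` and `2/3`, with `‖2/3‖ = 3 > 1`,
so `2/3 ∉ D(0,1)` and any disk `D(0,s)` containing all roots of `P'` has `s ≥ 3`.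
Hence the bound `r·|n|⁻¹` in the Gauss–Lucas analogue cannot be improved. -/
theorem stmt8 :
    (X ^ 3 - X ^ 2 : Polynomial ℚ_[3]).roots = {0, 0, 1} ∧
    (∀ z : ℚ_[3], (X ^ 3 - X ^ 2 : Polynomial ℚ_[3]).IsRoot z → ‖z‖ ≤ 1) ∧
    (X ^ 3 - X ^ 2 : Polynomial ℚ_[3]).derivative.roots = {0, 2 / 3} ∧
    (X ^ 3 - X ^ 2 : Polynomial ℚ_[3]).derivative.IsRoot (2 / 3 : ℚ_[3]) ∧
    ‖(2 / 3 : ℚ_[3])‖ = 3 ∧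
    ¬ ‖(2 / 3 : ℚ_[3])‖ ≤ 1 ∧
    ∀ s : ℝ, (∀ z : ℚ_[3], (X ^ 3 - X ^ 2 : Polynomial ℚ_[3]).derivative.IsRoot z →
      ‖z‖ ≤ s) → 3 ≤ s := by
  have h3 : (3 : ℚ_[3]) ≠ 0 := three_ne_zero
  have hP : (X ^ 3 - X ^ 2 : ℚ_[3][X]) ≠ 0 := fun h => by
    simpa [h] using roots_X_pow_three_sub_X_pow_two (R := ℚ_[3])
  have hP' : derivative (X ^ 3 - X ^ 2 : ℚ_[3][X]) ≠ 0 := fun h => by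
    simpa [h] using roots_derivative_X_pow_three_sub_X_pow_two h3
  have hroot : (derivative (X ^ 3 - X ^ 2 : ℚ_[3][X])).IsRoot (2 / 3) :=
    (mem_roots hP').1 (by rw [roots_derivative_X_pow_three_sub_X_pow_two h3]; simp)
  refine ⟨roots_X_pow_three_sub_X_pow_two, fun z hz => ?_,
    roots_derivative_X_pow_three_sub_X_pow_two h3, hroot, norm_two_div_three,
    by rw [norm_two_div_three]; norm_num, fun s hs => norm_two_div_three ▸ hs _ hroot⟩
  have hmem : z ∈ ({0, 0, 1} : Multiset ℚ_[3]) :=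
    roots_X_pow_three_sub_X_pow_two (R := ℚ_[3]) ▸ (mem_roots hP).2 hz
  simp only [Multiset.insert_eq_cons, Multiset.mem_cons, Multiset.mem_singleton] at hmem
  rcases hmem with rfl | rfl | rfl <;> simp
end
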